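/- arXiv:2209.04839 — 4 statements merged into one kernel-verified Lean document; each statement's English description precedes it below -/
import Mathlib

section
/- Let μ > 0. Then for every x ∈ [0, π/2], the solution ω₁ satisfies the Volterra integral equation ω₁(x,μ) = (μ·a₂' + a₂)·cos(μx) + ((μ·a₁' + a₁)/μ)·sin(μx) − (1/μ)·∫₀ˣ q(θ)·sin(μ(x − θ))·ω₁(θ − Δ(θ), μ) dθ. -/
open Real Set

theorem stmt0
    (a₁ a₁' a₂ a₂' b δ : ℝ) (hδ : δ ≠ 0) (ha₂' : a₂' ≠ 0)
    (q Δ : ℝ → ℝ)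
    (hq1 : ContinuousOn q (Ico 0 (π/2))) (hq2 : ContinuousOn q (Ioc (π/2) π))
    (hqlim1 : ∃ L : ℝ, Filter.Tendsto q (nhdsWithin (π/2) (Iio (π/2))) (nhds L))
    (hqlim2 : ∃ L : ℝ, Filter.Tendsto q (nhdsWithin (π/2) (Ioi (π/2))) (nhds L))
    (hΔ1 : ContinuousOn Δ (Ico 0 (π/2))) (hΔ2 : ContinuousOn Δ (Ioc (π/2) π))
    (hΔlim1 : ∃ L : ℝ, Filter.Tendsto Δ (nhdsWithin (π/2) (Iio (π/2))) (nhds L))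
    (hΔlim2 : ∃ L : ℝ, Filter.Tendsto Δ (nhdsWithin (π/2) (Ioi (π/2))) (nhds L))
    (hΔ0 : ∀ x, 0 ≤ Δ x)
    (hret1 : ∀ x ∈ Ico 0 (π/2), 0 ≤ x - Δ x)
    (hret2 : ∀ x ∈ Ioc (π/2) π, π/2 ≤ x - Δ x)
    (μ : ℝ) (hμ : 0 < μ)
    (ω₁ ω₁d ω₁dd : ℝ → ℝ)
    (hder1 : ∀ x ∈ Icc 0 (π/2), HasDerivWithinAt ω₁ (ω₁d x) (Icc 0 (π/2)) x)
    (hder2 : ∀ x ∈ Icc 0 (π/2), HasDerivWithinAt ω₁d (ω₁dd x) (Icc 0 (π/2)) x)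
    (hcont : ContinuousOn ω₁dd (Icc 0 (π/2)))
    (hode : ∀ x ∈ Icc 0 (π/2), ω₁dd x + q x * ω₁ (x - Δ x) = -μ^2 * ω₁ x)
    (hinit : ω₁ 0 = μ * a₂' + a₂)
    (hinit' : ω₁d 0 = μ * a₁' + a₁) :
    ∀ x ∈ Icc 0 (π/2),
      ω₁ x = (μ * a₂' + a₂) * Real.cos (μ * x)
        + ((μ * a₁' + a₁) / μ) * Real.sin (μ * x)
        - (1/μ) * ∫ θ in (0:ℝ)..x, q θ * Real.sin (μ * (x - θ)) * ω₁ (θ - Δ θ) := by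

  intro x hx
  obtain ⟨hx0, hxπ⟩ := hx
  have hsub : Icc (0:ℝ) x ⊆ Icc 0 (π/2) := Icc_subset_Icc le_rfl hxπ
  have hcω : ContinuousOn ω₁ (Icc 0 (π/2)) :=
    fun t ht => (hder1 t ht).continuousWithinAt
  have hcωd : ContinuousOn ω₁d (Icc 0 (π/2)) :=
    fun t ht => (hder2 t ht).continuousWithinAt
  set g : ℝ → ℝ := fun θ => Real.sin (μ*(x-θ)) * ω₁d θ + μ * (Real.cos (μ*(x-θ)) * ω₁ θ)
    with hg
  set φ : ℝ → ℝ := fun θ => Real.sin (μ*(x-θ)) * (-(μ^2 * ω₁ θ) - ω₁dd θ) with hφ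
  have hcφ : ContinuousOn φ (Icc 0 (π/2)) := by
    apply ContinuousOn.mul
    · exact (Real.continuous_sin.comp (continuous_const.mul
        (continuous_const.sub continuous_id))).continuousOn
    · exact ((continuousOn_const.mul hcω).neg).sub hcont
  have key : ∫ θ in (0:ℝ)..x, (-φ θ) = g x - g 0 := by
    apply intervalIntegral.integral_eq_sub_of_hasDeriv_right_of_le hx0
    · apply ContinuousOn.add
      · exact ((Real.continuous_sin.comp (continuous_const.mul
          (continuous_const.sub continuous_id))).continuousOn).mul (hcωd.mono hsub)
      · exact continuousOn_const.mul
          (((Real.continuous_cos.comp (continuous_const.mul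
            (continuous_const.sub continuous_id))).continuousOn).mul (hcω.mono hsub))
    · intro θ hθ
      have hθmem : θ ∈ Icc (0:ℝ) (π/2) := ⟨hθ.1.le, (hθ.2.trans_le hxπ).le⟩
      have hnb : Icc (0:ℝ) (π/2) ∈ nhds θ :=
        Icc_mem_nhds hθ.1 (hθ.2.trans_le hxπ)
      have hω : HasDerivAt ω₁ (ω₁d θ) θ := (hder1 θ hθmem).hasDerivAt hnb
      have hωd : HasDerivAt ω₁d (ω₁dd θ) θ := (hder2 θ hθmem).hasDerivAt hnb
      have hu : HasDerivAt (fun θ => μ*(x-θ)) (μ * (0-1)) θ :=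
        ((hasDerivAt_const θ x).sub (hasDerivAt_id θ)).const_mul μ
      have hsin := hu.sin
      have hcos := hu.cos
      have hd : HasDerivAt g
          (Real.cos (μ*(x-θ)) * (μ*(0-1)) * ω₁d θ + Real.sin (μ*(x-θ)) * ω₁dd θ
            + μ * ((-Real.sin (μ*(x-θ)) * (μ*(0-1))) * ω₁ θ
              + Real.cos (μ*(x-θ)) * ω₁d θ)) θ :=
        (hsin.mul hωd).add ((hcos.mul hω).const_mul μ)
      have heq : Real.cos (μ*(x-θ)) * (μ*(0-1)) * ω₁d θ + Real.sin (μ*(x-θ)) * ω₁dd θ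
            + μ * ((-Real.sin (μ*(x-θ)) * (μ*(0-1))) * ω₁ θ
              + Real.cos (μ*(x-θ)) * ω₁d θ) = -φ θ := by
        simp only [hφ]; ring
      exact (heq ▸ hd).hasDerivWithinAt
    · have : IntervalIntegrable φ MeasureTheory.volume 0 x := by
        apply ContinuousOn.intervalIntegrable
        rw [uIcc_of_le hx0]
        exact hcφ.mono hsub
      exact this.neg
  have hint : ∫ θ in (0:ℝ)..x, φ θ = g 0 - g x := by
    rw [intervalIntegral.integral_neg] at key
    linarith
  have hcongr : (∫ θ in (0:ℝ)..x, q θ * Real.sin (μ * (x - θ)) * ω₁ (θ - Δ θ))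
      = ∫ θ in (0:ℝ)..x, φ θ := by
    apply intervalIntegral.integral_congr
    intro θ hθ
    rw [uIcc_of_le hx0] at hθ
    have hθmem : θ ∈ Icc (0:ℝ) (π/2) := hsub hθ
    have hq : q θ * ω₁ (θ - Δ θ) = -(μ^2 * ω₁ θ) - ω₁dd θ := by
      have := hode θ hθmem; linarith
    simp only [hφ]
    rw [← hq]; ring
  have hgx : g x = μ * ω₁ x := by
    simp [hg]
  have hg0 : g 0 = Real.sin (μ*x) * (μ * a₁' + a₁) + μ * (Real.cos (μ*x) * (μ * a₂' + a₂)) := by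
    simp [hg, hinit, hinit']
  rw [hcongr, hint, hgx, hg0]
  field_simp
  ring
end

section
/- Let μ > 0. Then for every x ∈ [0, π/2], the derivative of the solution ω₁ satisfies ω₁'(x,μ) = −μ·(μ·a₂' + a₂)·sin(μx) + (μ·a₁' + a₁)·cos(μx) − ∫₀ˣ q(θ)·cos(μ(x − θ))·ω₁(θ − Δ(θ), μ) dθ. -/
open Real Set

/-! The function `θ ↦ cos (μ (x - θ)) y'(θ) - μ sin (μ (x - θ)) y(θ)` has derivative
`cos (μ (x - θ)) (y''(θ) + μ² y(θ))`, so integrating it from `0` to `x` expresses `y'(x)`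
through the initial data and the forcing term `y'' + μ² y`, which the delay equation
identifies with `-q(θ) y(θ - Δ(θ))`. -/

theorem hasDerivAt_cos_mul_deriv_sub_sin_mul {y y' : ℝ → ℝ} {μ x θ y'' : ℝ}
    (hy : HasDerivAt y (y' θ) θ) (hy' : HasDerivAt y' y'' θ) :
    HasDerivAt (fun t => cos (μ * (x - t)) * y' t - μ * sin (μ * (x - t)) * y t)
      (cos (μ * (x - θ)) * (y'' + μ ^ 2 * y θ)) θ := by
  have hlin : HasDerivAt (fun t : ℝ => μ * (x - t)) (-μ) θ := by
    simpa using ((hasDerivAt_id θ).const_sub x).const_mul μ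
  exact ((hlin.cos.mul hy').sub ((hlin.sin.const_mul μ).mul hy)).congr_deriv (by ring)

theorem variation_of_constants_derivative {y y' y'' : ℝ → ℝ} {a b : ℝ} (μ : ℝ)
    (hy : ∀ t ∈ Icc a b, HasDerivWithinAt y (y' t) (Icc a b) t)
    (hy' : ∀ t ∈ Icc a b, HasDerivWithinAt y' (y'' t) (Icc a b) t)
    (hy'' : ContinuousOn y'' (Icc a b)) {x : ℝ} (hx : x ∈ Icc a b) :
    y' x = -μ * y a * sin (μ * (x - a)) + y' a * cos (μ * (x - a))
      + ∫ θ in a..x, cos (μ * (x - θ)) * (y'' θ + μ ^ 2 * y θ) := by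
  have hsub : Icc a x ⊆ Icc a b := Icc_subset_Icc le_rfl hx.2
  have hyc : ContinuousOn y (Icc a x) :=
    fun t ht => ((hy t (hsub ht)).continuousWithinAt).mono hsub
  have hy'c : ContinuousOn y' (Icc a x) :=
    fun t ht => ((hy' t (hsub ht)).continuousWithinAt).mono hsub
  have hcos : Continuous fun θ => cos (μ * (x - θ)) := by fun_prop
  have hsin : Continuous fun θ => sin (μ * (x - θ)) := by fun_prop
  have hftc : ∫ θ in a..x, cos (μ * (x - θ)) * (y'' θ + μ ^ 2 * y θ)
      = cos (μ * (x - x)) * y' x - μ * sin (μ * (x - x)) * y x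
        - (cos (μ * (x - a)) * y' a - μ * sin (μ * (x - a)) * y a) := by
    refine intervalIntegral.integral_eq_sub_of_hasDerivAt_of_le hx.1
      ((hcos.continuousOn.mul hy'c).sub ((continuous_const.mul hsin).continuousOn.mul hyc))
      (fun θ hθ => ?_) ?_
    · have hnhds : Icc a b ∈ nhds θ := Icc_mem_nhds hθ.1 (hθ.2.trans_le hx.2)
      have hθ' := hsub (Ioo_subset_Icc_self hθ)
      exact hasDerivAt_cos_mul_deriv_sub_sin_mul ((hy θ hθ').hasDerivAt hnhds)
        ((hy' θ hθ').hasDerivAt hnhds)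
    · exact (hcos.continuousOn.mul ((hy''.mono hsub).add (continuousOn_const.mul hyc))
        ).intervalIntegrable_of_Icc hx.1
  simp only [sub_self, mul_zero, cos_zero, sin_zero, one_mul, zero_mul, sub_zero] at hftc
  rw [hftc]
  ring

theorem stmt2_general
    (a₁ a₁' a₂ a₂' : ℝ)
    (q Δ : ℝ → ℝ)
    (μ : ℝ)
    (ω₁ ω₁d ω₁dd : ℝ → ℝ)
    (hder1 : ∀ x ∈ Icc 0 (π/2), HasDerivWithinAt ω₁ (ω₁d x) (Icc 0 (π/2)) x)
    (hder2 : ∀ x ∈ Icc 0 (π/2), HasDerivWithinAt ω₁d (ω₁dd x) (Icc 0 (π/2)) x)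
    (hcont : ContinuousOn ω₁dd (Icc 0 (π/2)))
    (hode : ∀ x ∈ Icc 0 (π/2), ω₁dd x + q x * ω₁ (x - Δ x) = -μ^2 * ω₁ x)
    (hinit : ω₁ 0 = μ * a₂' + a₂)
    (hinit' : ω₁d 0 = μ * a₁' + a₁) :
    ∀ x ∈ Icc 0 (π/2),
      ω₁d x = -μ * (μ * a₂' + a₂) * Real.sin (μ * x)
        + (μ * a₁' + a₁) * Real.cos (μ * x)
        - ∫ θ in (0:ℝ)..x, q θ * Real.cos (μ * (x - θ)) * ω₁ (θ - Δ θ) := by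
  intro x hx
  have hforcing : ∫ θ in (0:ℝ)..x, cos (μ * (x - θ)) * (ω₁dd θ + μ ^ 2 * ω₁ θ)
      = -∫ θ in (0:ℝ)..x, q θ * cos (μ * (x - θ)) * ω₁ (θ - Δ θ) := by
    rw [← intervalIntegral.integral_neg]
    refine intervalIntegral.integral_congr fun θ hθ => ?_
    rw [uIcc_of_le hx.1] at hθ
    have hodeθ := hode θ (Icc_subset_Icc le_rfl hx.2 hθ)
    linear_combination cos (μ * (x - θ)) * hodeθ
  rw [variation_of_constants_derivative μ hder1 hder2 hcont hx, hforcing, hinit, hinit', sub_zero]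
  ring

theorem stmt2
    (a₁ a₁' a₂ a₂' b δ : ℝ) (hδ : δ ≠ 0) (ha₂' : a₂' ≠ 0)
    (q Δ : ℝ → ℝ)
    (hq1 : ContinuousOn q (Ico 0 (π/2))) (hq2 : ContinuousOn q (Ioc (π/2) π))
    (hqlim1 : ∃ L : ℝ, Filter.Tendsto q (nhdsWithin (π/2) (Iio (π/2))) (nhds L))
    (hqlim2 : ∃ L : ℝ, Filter.Tendsto q (nhdsWithin (π/2) (Ioi (π/2))) (nhds L))
    (hΔ1 : ContinuousOn Δ (Ico 0 (π/2))) (hΔ2 : ContinuousOn Δ (Ioc (π/2) π))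
    (hΔlim1 : ∃ L : ℝ, Filter.Tendsto Δ (nhdsWithin (π/2) (Iio (π/2))) (nhds L))
    (hΔlim2 : ∃ L : ℝ, Filter.Tendsto Δ (nhdsWithin (π/2) (Ioi (π/2))) (nhds L))
    (hΔ0 : ∀ x, 0 ≤ Δ x)
    (hret1 : ∀ x ∈ Ico 0 (π/2), 0 ≤ x - Δ x)
    (hret2 : ∀ x ∈ Ioc (π/2) π, π/2 ≤ x - Δ x)
    (μ : ℝ) (hμ : 0 < μ)
    (ω₁ ω₁d ω₁dd : ℝ → ℝ)
    (hder1 : ∀ x ∈ Icc 0 (π/2), HasDerivWithinAt ω₁ (ω₁d x) (Icc 0 (π/2)) x)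
    (hder2 : ∀ x ∈ Icc 0 (π/2), HasDerivWithinAt ω₁d (ω₁dd x) (Icc 0 (π/2)) x)
    (hcont : ContinuousOn ω₁dd (Icc 0 (π/2)))
    (hode : ∀ x ∈ Icc 0 (π/2), ω₁dd x + q x * ω₁ (x - Δ x) = -μ^2 * ω₁ x)
    (hinit : ω₁ 0 = μ * a₂' + a₂)
    (hinit' : ω₁d 0 = μ * a₁' + a₁) :
    ∀ x ∈ Icc 0 (π/2),
      ω₁d x = -μ * (μ * a₂' + a₂) * Real.sin (μ * x)
        + (μ * a₁' + a₁) * Real.cos (μ * x)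
        - ∫ θ in (0:ℝ)..x, q θ * Real.cos (μ * (x - θ)) * ω₁ (θ - Δ θ) :=
  stmt2_general a₁ a₁' a₂ a₂' q Δ μ ω₁ ω₁d ω₁dd hder1 hder2 hcont hode hinit hinit'
end

section
/- Let μ > 0 and suppose (μ·a₂' + a₂, μ·a₁' + a₁) ≠ (0, 0). Then the boundary value problem has a nontrivial solution — i.e. there exist twice continuously differentiable functions y₁ on [0, π/2] and y₂ on [π/2, π], not both identically zero, each satisfying the delay differential equation on its interval, together with the boundary condition (μ·a₁' + a₁)·y₁(0) − (μ·a₂' + a₂)·y₁'(0) = 0, the boundary condition cos(b)·y₂(π) + μ·sin(b)·y₂'(π) = 0, and the interface conditions y₁(π/2) = δ·y₂(π/2) and y₁'(π/2) = δ·y₂'(π/2) — if and only if F(μ) = 0, where F(μ) = cos(b)·ω₂(π, μ) + μ·sin(b)·ω₂'(π, μ). -/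
open Real Set Filter Topology

/-
The boundary condition at `0` makes the Cauchy data `(y₁ 0, y₁' 0)` of a solution a multiple `k`
of `(μ a₂' + a₂, μ a₁' + a₁)`. Since `q` is bounded and the delay only looks back, the initial
value problem on each half interval has unique solutions (a Gronwall-type argument on short
steps), so `(y₁, y₂) = k (ω₁, ω₂)` with `k ≠ 0`, and the condition at `π` reads `k F(μ) = 0`.
Conversely, if `F(μ) = 0` then `(ω₁, ω₂)` is itself a solution, nontrivial because its Cauchy
data at `0` is not zero.
-/

theorem exists_bound_of_continuousOn_Ioo {f : ℝ → ℝ} {a c la lc : ℝ}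
    (hf : ContinuousOn f (Ioo a c)) (ha : Tendsto f (𝓝[>] a) (𝓝 la))
    (hc : Tendsto f (𝓝[<] c) (𝓝 lc)) : ∃ Q, ∀ t ∈ Ioo a c, |f t| ≤ Q := by
  obtain ⟨Q, hQ⟩ := isCompact_Icc.exists_bound_of_continuousOn
    (continuousOn_Icc_extendFrom_Ioo hf ha hc)
  refine ⟨Q, fun t ht => ?_⟩
  simpa [extendFrom_extends hf t ht] using hQ t (Ioo_subset_Icc_self ht)

theorem exists_bound_of_continuousOn_Ico {f : ℝ → ℝ} {a c lc : ℝ} (hac : a < c)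
    (hf : ContinuousOn f (Ico a c)) (hc : Tendsto f (𝓝[<] c) (𝓝 lc)) :
    ∃ Q, ∀ t ∈ Ioo a c, |f t| ≤ Q :=
  exists_bound_of_continuousOn_Ioo (hf.mono Ioo_subset_Ico_self)
    (((continuousWithinAt_Ico_iff_Ici hac).1 (hf a ⟨le_rfl, hac⟩)).mono Ioi_subset_Ici_self).tendsto
    hc

theorem exists_bound_of_continuousOn_Ioc {f : ℝ → ℝ} {a c la : ℝ} (hac : a < c)
    (hf : ContinuousOn f (Ioc a c)) (ha : Tendsto f (𝓝[>] a) (𝓝 la)) :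
    ∃ Q, ∀ t ∈ Ioo a c, |f t| ≤ Q :=
  exists_bound_of_continuousOn_Ioo (hf.mono Ioo_subset_Ioc_self) ha
    (((continuousWithinAt_Ioc_iff_Iic hac).1 (hf c ⟨hac, le_rfl⟩)).mono Iio_subset_Iic_self).tendsto

theorem HasDerivWithinAt.eq_zero_of_forall_Icc_eq_zero {f : ℝ → ℝ} {f' a b x : ℝ} (hab : a < b)
    (hx : x ∈ Icc a b) (hf : HasDerivWithinAt f f' (Icc a b) x)
    (h0 : ∀ t ∈ Icc a b, f t = 0) : f' = 0 :=
  (uniqueDiffOn_Icc hab x hx).eq_deriv _ hf ((hasDerivWithinAt_const x _ 0).congr h0 (h0 x hx))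

theorem exists_eq_mul_of_mul_sub_mul_eq_zero {K : Type*} [Field K] {A B x y : K}
    (hAB : (A, B) ≠ (0, 0)) (h : B * x - A * y = 0) : ∃ k, x = k * A ∧ y = k * B := by
  by_cases hA : A = 0
  · have hB : B ≠ 0 := fun hB => hAB (by rw [hA, hB])
    have hx : x = 0 := by simpa [hA, hB] using h
    exact ⟨y / B, by rw [hx, hA, mul_zero], by field_simp⟩
  · refine ⟨x / A, by field_simp, ?_⟩
    field_simp
    linear_combination -h

theorem abs_sub_le_mul_of_abs_deriv_le_on_Ioo {f f' : ℝ → ℝ} {x y C : ℝ} (hxy : x ≤ y)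
    (hf : ∀ t ∈ Icc x y, HasDerivWithinAt f (f' t) (Icc x y) t)
    (hC : ∀ t ∈ Ioo x y, |f' t| ≤ C) : |f y - f x| ≤ C * (y - x) := by
  rcases hxy.eq_or_lt with rfl | hlt
  · simp
  obtain ⟨ξ, hξ, hslope⟩ := exists_hasDerivAt_eq_slope f f' hlt
    (fun t ht => (hf t ht).continuousWithinAt)
    (fun t ht => (hf t (Ioo_subset_Icc_self ht)).hasDerivAt (Icc_mem_nhds ht.1 ht.2))
  rw [eq_div_iff (sub_pos.2 hlt).ne'] at hslope
  rw [← hslope, abs_mul, abs_of_pos (sub_pos.2 hlt)]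
  exact mul_le_mul_of_nonneg_right (hC ξ hξ) (sub_pos.2 hlt).le

section DelayInequality

variable {a c K : ℝ} {r u u' u'' : ℝ → ℝ}
  (hu : ∀ x ∈ Icc a c, HasDerivWithinAt u (u' x) (Icc a c) x)
  (hu' : ∀ x ∈ Icc a c, HasDerivWithinAt u' (u'' x) (Icc a c) x)
  (hr : ∀ t ∈ Ioo a c, r t ∈ Icc a t) (hK : 0 ≤ K)
  (hbound : ∀ t ∈ Ioo a c, |u'' t| ≤ K * (|u (r t)| + |u t|))
include hu hu' hr hK hbound

theorem abs_add_abs_deriv_le_of_forall_Icc_eq_zero {s m B : ℝ} (has : a ≤ s) (hmc : m ≤ c)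
    (hzero : ∀ t ∈ Icc a s, u t = 0 ∧ u' t = 0) (hB : ∀ t ∈ Icc s m, |u t| ≤ B ∧ |u' t| ≤ B) :
    ∀ t ∈ Icc s m, |u t| + |u' t| ≤ (1 + 2 * K) * (t - s) * B := by
  intro t ht
  have hB0 : 0 ≤ B := (abs_nonneg _).trans (hB t ht).1
  have hsub : Icc s t ⊆ Icc a c := Icc_subset_Icc has (ht.2.trans hmc)
  have hIoo : ∀ τ ∈ Ioo s t, τ ∈ Ioo s m := fun τ hτ => ⟨hτ.1, hτ.2.trans_le ht.2⟩
  have hu''B : ∀ τ ∈ Ioo s t, |u'' τ| ≤ 2 * K * B := by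
    intro τ hτ
    have hτm := hIoo τ hτ
    have hτc : τ ∈ Ioo a c := ⟨has.trans_lt hτ.1, hτm.2.trans_le hmc⟩
    have hrτ : |u (r τ)| ≤ B := by
      rcases le_or_gt (r τ) s with h | h
      · rw [(hzero _ ⟨(hr τ hτc).1, h⟩).1, abs_zero]
        exact hB0
      · exact (hB _ ⟨h.le, (hr τ hτc).2.trans hτm.2.le⟩).1
    calc |u'' τ| ≤ K * (|u (r τ)| + |u τ|) := hbound τ hτc
      _ ≤ K * (B + B) := by gcongr; exact (hB τ (Ioo_subset_Icc_self hτm)).1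
      _ = 2 * K * B := by ring
  have hzs := hzero s ⟨has, le_rfl⟩
  have hmvt := abs_sub_le_mul_of_abs_deriv_le_on_Ioo ht.1
    (fun τ hτ => (hu τ (hsub hτ)).mono hsub)
    (fun τ hτ => (hB τ (Ioo_subset_Icc_self (hIoo τ hτ))).2)
  have hmvt' := abs_sub_le_mul_of_abs_deriv_le_on_Ioo ht.1
    (fun τ hτ => (hu' τ (hsub hτ)).mono hsub) hu''B
  rw [hzs.1, sub_zero] at hmvt
  rw [hzs.2, sub_zero] at hmvt'
  linear_combination hmvt + hmvt'

/- With `B` the maximum of `|u| + |u'|` on `[s, m]`, attained at `w`, the estimate above gives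
`B ≤ (1 + 2K) (m - s) B ≤ B / 2`. -/
theorem forall_Icc_eq_zero_of_abs_le_step {s m : ℝ} (has : a ≤ s) (hsm : s ≤ m) (hmc : m ≤ c)
    (hshort : (1 + 2 * K) * (m - s) ≤ 1 / 2) (hzero : ∀ t ∈ Icc a s, u t = 0 ∧ u' t = 0) :
    ∀ t ∈ Icc a m, u t = 0 ∧ u' t = 0 := by
  have hsub : Icc s m ⊆ Icc a c := Icc_subset_Icc has hmc
  have hcont : ContinuousOn (fun t => |u t| + |u' t|) (Icc s m) := fun t ht =>
    ((hu t (hsub ht)).continuousWithinAt.abs.add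
      (hu' t (hsub ht)).continuousWithinAt.abs).mono hsub
  obtain ⟨w, hw, hmax⟩ := isCompact_Icc.exists_isMaxOn (nonempty_Icc.2 hsm) hcont
  set B := |u w| + |u' w|
  have hmax' : ∀ t ∈ Icc s m, |u t| + |u' t| ≤ B := fun t ht => hmax ht
  have hB : ∀ t ∈ Icc s m, |u t| ≤ B ∧ |u' t| ≤ B := fun t ht =>
    ⟨by linarith [hmax' t ht, abs_nonneg (u' t)], by linarith [hmax' t ht, abs_nonneg (u t)]⟩
  have hB0 : 0 ≤ B := by positivity
  have hBle : B ≤ B / 2 :=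
    calc B ≤ (1 + 2 * K) * (w - s) * B :=
          abs_add_abs_deriv_le_of_forall_Icc_eq_zero hu hu' hr hK hbound has hmc hzero hB w hw
      _ ≤ (1 + 2 * K) * (m - s) * B := by gcongr; exact hw.2
      _ ≤ 1 / 2 * B := by gcongr
      _ = B / 2 := by ring
  intro t ht
  rcases le_or_gt t s with h | h
  · exact hzero t ⟨ht.1, h⟩
  · have := hmax' t ⟨h.le, ht.2⟩
    constructor <;> apply abs_nonpos_iff.1 <;>
      linarith [abs_nonneg (u t), abs_nonneg (u' t)]

/- The vanishing of `u` and `u'` propagates along `[a, c]` in steps of the fixed length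
`1 / (2 (1 + 2K))`. -/
theorem forall_Icc_eq_zero_of_abs_le (hac : a ≤ c) (h0 : u a = 0) (h0' : u' a = 0) :
    ∀ t ∈ Icc a c, u t = 0 ∧ u' t = 0 := by
  set h := 1 / (2 * (1 + 2 * K)) with h_def
  have hh : 0 < h := by positivity
  have hsteps : ∀ n : ℕ, ∀ t ∈ Icc a (min (a + n * h) c), u t = 0 ∧ u' t = 0 := by
    intro n
    induction n with
    | zero =>
      intro t ht
      obtain rfl : t = a := le_antisymm (by simpa using ht.2.trans (min_le_left _ _)) ht.1
      exact ⟨h0, h0'⟩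
    | succ n ih =>
      refine forall_Icc_eq_zero_of_abs_le_step hu hu' hr hK hbound
        (le_min (by nlinarith) hac) (min_le_min_right _ (by push_cast; linarith))
        (min_le_right _ _) ?_ ih
      have hmin : min (a + ↑(n + 1) * h) c ≤ min (a + n * h) c + h := by
        rw [← min_add_add_right]
        exact min_le_min (by push_cast; linarith) (by linarith)
      calc (1 + 2 * K) * (min (a + ↑(n + 1) * h) c - min (a + n * h) c)
          ≤ (1 + 2 * K) * h := by gcongr; linarith
        _ = 1 / 2 := by rw [h_def]; field_simp
  obtain ⟨n, hn⟩ := exists_nat_ge ((c - a) / h)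
  have hc : min (a + n * h) c = c := min_eq_right (by rw [div_le_iff₀ hh] at hn; linarith)
  simpa [hc] using hsteps n

end DelayInequality

structure IsDelaySolution (q Δ : ℝ → ℝ) (lam a b : ℝ) (y y' y'' : ℝ → ℝ) : Prop where
  hasDerivWithinAt : ∀ x ∈ Icc a b, HasDerivWithinAt y (y' x) (Icc a b) x
  hasDerivWithinAt_deriv : ∀ x ∈ Icc a b, HasDerivWithinAt y' (y'' x) (Icc a b) x
  ode : ∀ x ∈ Icc a b, y'' x + q x * y (x - Δ x) = -lam * y x

namespace IsDelaySolution

variable {q Δ : ℝ → ℝ} {lam a b : ℝ} {y y' y'' z z' z'' : ℝ → ℝ}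

theorem const_mul (hy : IsDelaySolution q Δ lam a b y y' y'') (k : ℝ) :
    IsDelaySolution q Δ lam a b (fun x => k * y x) (fun x => k * y' x) (fun x => k * y'' x) where
  hasDerivWithinAt x hx := (hy.hasDerivWithinAt x hx).const_mul k
  hasDerivWithinAt_deriv x hx := (hy.hasDerivWithinAt_deriv x hx).const_mul k
  ode x hx := by linear_combination k * hy.ode x hx

theorem sub (hy : IsDelaySolution q Δ lam a b y y' y'')
    (hz : IsDelaySolution q Δ lam a b z z' z'') :
    IsDelaySolution q Δ lam a b (fun x => y x - z x) (fun x => y' x - z' x)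
      (fun x => y'' x - z'' x) where
  hasDerivWithinAt x hx := (hy.hasDerivWithinAt x hx).sub (hz.hasDerivWithinAt x hx)
  hasDerivWithinAt_deriv x hx :=
    (hy.hasDerivWithinAt_deriv x hx).sub (hz.hasDerivWithinAt_deriv x hx)
  ode x hx := by linear_combination hy.ode x hx - hz.ode x hx

theorem eq_of_eq_of_deriv_eq (hy : IsDelaySolution q Δ lam a b y y' y'')
    (hz : IsDelaySolution q Δ lam a b z z' z'') (hab : a ≤ b) {Q : ℝ}
    (hq : ∀ t ∈ Ioo a b, |q t| ≤ Q) (hΔ : ∀ t ∈ Ioo a b, 0 ≤ Δ t ∧ a ≤ t - Δ t)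
    (h0 : y a = z a) (h0' : y' a = z' a) : ∀ x ∈ Icc a b, y x = z x ∧ y' x = z' x := by
  have hd := hy.sub hz
  have hbound : ∀ t ∈ Ioo a b, |y'' t - z'' t| ≤
      (|Q| + |lam|) * (|y (t - Δ t) - z (t - Δ t)| + |y t - z t|) := by
    intro t ht
    have hqt : |q t| ≤ |Q| := (hq t ht).trans (le_abs_self Q)
    rw [show y'' t - z'' t = -(q t * (y (t - Δ t) - z (t - Δ t))) - lam * (y t - z t) by
      linear_combination hd.ode t (Ioo_subset_Icc_self ht)]
    calc _ ≤ |q t| * |y (t - Δ t) - z (t - Δ t)| + |lam| * |y t - z t| := by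
          simpa only [abs_neg, abs_mul] using
            abs_sub (-(q t * (y (t - Δ t) - z (t - Δ t)))) (lam * (y t - z t))
      _ ≤ _ := by
          nlinarith [abs_nonneg (y (t - Δ t) - z (t - Δ t)), abs_nonneg (y t - z t),
            abs_nonneg lam, abs_nonneg Q]
  have hzero := forall_Icc_eq_zero_of_abs_le hd.hasDerivWithinAt hd.hasDerivWithinAt_deriv
    (fun t ht => ⟨(hΔ t ht).2, by linarith [(hΔ t ht).1]⟩)
    (add_nonneg (abs_nonneg Q) (abs_nonneg lam)) hbound hab
    (sub_eq_zero.2 h0) (sub_eq_zero.2 h0')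
  exact fun x hx => ⟨sub_eq_zero.1 (hzero x hx).1, sub_eq_zero.1 (hzero x hx).2⟩

end IsDelaySolution

theorem stmt6_general
    (a₁ a₁' a₂ a₂' b δ : ℝ) (hδ : δ ≠ 0)
    (q Δ : ℝ → ℝ)
    (hq1 : ContinuousOn q (Ico 0 (π/2))) (hq2 : ContinuousOn q (Ioc (π/2) π))
    (hqlim1 : ∃ L : ℝ, Filter.Tendsto q (nhdsWithin (π/2) (Iio (π/2))) (nhds L))
    (hqlim2 : ∃ L : ℝ, Filter.Tendsto q (nhdsWithin (π/2) (Ioi (π/2))) (nhds L))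
    (hΔ0 : ∀ x, 0 ≤ Δ x)
    (hret1 : ∀ x ∈ Ico 0 (π/2), 0 ≤ x - Δ x)
    (hret2 : ∀ x ∈ Ioc (π/2) π, π/2 ≤ x - Δ x)
    (μ : ℝ)
    (hnz : (μ * a₂' + a₂, μ * a₁' + a₁) ≠ (0, 0))
    (ω₁ ω₁d ω₁dd : ℝ → ℝ)
    (hder1 : ∀ x ∈ Icc 0 (π/2), HasDerivWithinAt ω₁ (ω₁d x) (Icc 0 (π/2)) x)
    (hder2 : ∀ x ∈ Icc 0 (π/2), HasDerivWithinAt ω₁d (ω₁dd x) (Icc 0 (π/2)) x)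
    (hcont : ContinuousOn ω₁dd (Icc 0 (π/2)))
    (hode : ∀ x ∈ Icc 0 (π/2), ω₁dd x + q x * ω₁ (x - Δ x) = -μ^2 * ω₁ x)
    (hinit : ω₁ 0 = μ * a₂' + a₂)
    (hinit' : ω₁d 0 = μ * a₁' + a₁)
    (ω₂ ω₂d ω₂dd : ℝ → ℝ)
    (hder1' : ∀ x ∈ Icc (π/2) π, HasDerivWithinAt ω₂ (ω₂d x) (Icc (π/2) π) x)
    (hder2' : ∀ x ∈ Icc (π/2) π, HasDerivWithinAt ω₂d (ω₂dd x) (Icc (π/2) π) x)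
    (hcont' : ContinuousOn ω₂dd (Icc (π/2) π))
    (hode' : ∀ x ∈ Icc (π/2) π, ω₂dd x + q x * ω₂ (x - Δ x) = -μ^2 * ω₂ x)
    (hifc : ω₂ (π/2) = δ⁻¹ * ω₁ (π/2))
    (hifc' : ω₂d (π/2) = δ⁻¹ * ω₁d (π/2)) :
    (∃ y₁ y₁d y₁dd y₂ y₂d y₂dd : ℝ → ℝ,
      (∀ x ∈ Icc 0 (π/2), HasDerivWithinAt y₁ (y₁d x) (Icc 0 (π/2)) x) ∧
      (∀ x ∈ Icc 0 (π/2), HasDerivWithinAt y₁d (y₁dd x) (Icc 0 (π/2)) x) ∧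
      ContinuousOn y₁dd (Icc 0 (π/2)) ∧
      (∀ x ∈ Icc (π/2) π, HasDerivWithinAt y₂ (y₂d x) (Icc (π/2) π) x) ∧
      (∀ x ∈ Icc (π/2) π, HasDerivWithinAt y₂d (y₂dd x) (Icc (π/2) π) x) ∧
      ContinuousOn y₂dd (Icc (π/2) π) ∧
      ¬((∀ x ∈ Icc 0 (π/2), y₁ x = 0) ∧ (∀ x ∈ Icc (π/2) π, y₂ x = 0)) ∧
      (∀ x ∈ Icc 0 (π/2), y₁dd x + q x * y₁ (x - Δ x) = -μ^2 * y₁ x) ∧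
      (∀ x ∈ Icc (π/2) π, y₂dd x + q x * y₂ (x - Δ x) = -μ^2 * y₂ x) ∧
      (μ * a₁' + a₁) * y₁ 0 - (μ * a₂' + a₂) * y₁d 0 = 0 ∧
      Real.cos b * y₂ π + μ * Real.sin b * y₂d π = 0 ∧
      y₁ (π/2) = δ * y₂ (π/2) ∧
      y₁d (π/2) = δ * y₂d (π/2)) ↔
    Real.cos b * ω₂ π + μ * Real.sin b * ω₂d π = 0 := by
  have hπ₁ : 0 < π/2 := by positivity
  have hπ₂ : π/2 < π := by linarith [pi_pos]
  have hmid : π/2 ∈ Icc 0 (π/2) := right_mem_Icc.2 hπ₁.le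
  obtain ⟨Q₁, hQ₁⟩ := exists_bound_of_continuousOn_Ico hπ₁ hq1 hqlim1.choose_spec
  obtain ⟨Q₂, hQ₂⟩ := exists_bound_of_continuousOn_Ioc hπ₂ hq2 hqlim2.choose_spec
  have hΔ₁ (t) (ht : t ∈ Ioo 0 (π/2)) := And.intro (hΔ0 t) (hret1 t (Ioo_subset_Ico_self ht))
  have hΔ₂ (t) (ht : t ∈ Ioo (π/2) π) := And.intro (hΔ0 t) (hret2 t (Ioo_subset_Ioc_self ht))
  constructor
  · rintro ⟨y₁, y₁d, y₁dd, y₂, y₂d, y₂dd, hy₁, hy₁', -, hy₂, hy₂', -, hnt, hode₁, hode₂, hbc₀, hbcπ,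
      hy₁₂, hy₁₂'⟩
    obtain ⟨k, hk, hk'⟩ := exists_eq_mul_of_mul_sub_mul_eq_zero hnz hbc₀
    have h₁ := IsDelaySolution.eq_of_eq_of_deriv_eq ⟨hy₁, hy₁', hode₁⟩
      (IsDelaySolution.const_mul ⟨hder1, hder2, hode⟩ k) hπ₁.le hQ₁ hΔ₁
      (by rw [hk, hinit]) (by rw [hk', hinit'])
    have h₂ := IsDelaySolution.eq_of_eq_of_deriv_eq ⟨hy₂, hy₂', hode₂⟩
      (IsDelaySolution.const_mul ⟨hder1', hder2', hode'⟩ k) hπ₂.le hQ₂ hΔ₂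
      (by rw [hifc, mul_left_comm, eq_inv_mul_iff_mul_eq₀ hδ, ← hy₁₂, (h₁ _ hmid).1])
      (by rw [hifc', mul_left_comm, eq_inv_mul_iff_mul_eq₀ hδ, ← hy₁₂', (h₁ _ hmid).2])
    have hk0 : k ≠ 0 := by
      rintro rfl
      exact hnt ⟨fun x hx => by simpa using (h₁ x hx).1, fun x hx => by simpa using (h₂ x hx).1⟩
    rw [(h₂ π ⟨hπ₂.le, le_rfl⟩).1, (h₂ π ⟨hπ₂.le, le_rfl⟩).2] at hbcπ
    exact (mul_eq_zero.1 (by linear_combination hbcπ)).resolve_left hk0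
  · intro hF
    have h0 : (0 : ℝ) ∈ Icc 0 (π/2) := left_mem_Icc.2 hπ₁.le
    refine ⟨ω₁, ω₁d, ω₁dd, ω₂, ω₂d, ω₂dd, hder1, hder2, hcont, hder1', hder2', hcont', ?_, hode,
      hode', by rw [hinit, hinit']; ring, hF, by rw [hifc, mul_inv_cancel_left₀ hδ],
      by rw [hifc', mul_inv_cancel_left₀ hδ]⟩
    rintro ⟨hω₁, -⟩
    exact hnz (Prod.ext (hinit ▸ hω₁ 0 h0)
      (hinit' ▸ (hder1 0 h0).eq_zero_of_forall_Icc_eq_zero hπ₁ h0 hω₁))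

theorem stmt6
    (a₁ a₁' a₂ a₂' b δ : ℝ) (hδ : δ ≠ 0) (ha₂' : a₂' ≠ 0)
    (q Δ : ℝ → ℝ)
    (hq1 : ContinuousOn q (Ico 0 (π/2))) (hq2 : ContinuousOn q (Ioc (π/2) π))
    (hqlim1 : ∃ L : ℝ, Filter.Tendsto q (nhdsWithin (π/2) (Iio (π/2))) (nhds L))
    (hqlim2 : ∃ L : ℝ, Filter.Tendsto q (nhdsWithin (π/2) (Ioi (π/2))) (nhds L))
    (hΔ1 : ContinuousOn Δ (Ico 0 (π/2))) (hΔ2 : ContinuousOn Δ (Ioc (π/2) π))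
    (hΔlim1 : ∃ L : ℝ, Filter.Tendsto Δ (nhdsWithin (π/2) (Iio (π/2))) (nhds L))
    (hΔlim2 : ∃ L : ℝ, Filter.Tendsto Δ (nhdsWithin (π/2) (Ioi (π/2))) (nhds L))
    (hΔ0 : ∀ x, 0 ≤ Δ x)
    (hret1 : ∀ x ∈ Ico 0 (π/2), 0 ≤ x - Δ x)
    (hret2 : ∀ x ∈ Ioc (π/2) π, π/2 ≤ x - Δ x)
    (μ : ℝ) (hμ : 0 < μ)
    (hnz : (μ * a₂' + a₂, μ * a₁' + a₁) ≠ (0, 0))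
    (ω₁ ω₁d ω₁dd : ℝ → ℝ)
    (hder1 : ∀ x ∈ Icc 0 (π/2), HasDerivWithinAt ω₁ (ω₁d x) (Icc 0 (π/2)) x)
    (hder2 : ∀ x ∈ Icc 0 (π/2), HasDerivWithinAt ω₁d (ω₁dd x) (Icc 0 (π/2)) x)
    (hcont : ContinuousOn ω₁dd (Icc 0 (π/2)))
    (hode : ∀ x ∈ Icc 0 (π/2), ω₁dd x + q x * ω₁ (x - Δ x) = -μ^2 * ω₁ x)
    (hinit : ω₁ 0 = μ * a₂' + a₂)
    (hinit' : ω₁d 0 = μ * a₁' + a₁)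
    (ω₂ ω₂d ω₂dd : ℝ → ℝ)
    (hder1' : ∀ x ∈ Icc (π/2) π, HasDerivWithinAt ω₂ (ω₂d x) (Icc (π/2) π) x)
    (hder2' : ∀ x ∈ Icc (π/2) π, HasDerivWithinAt ω₂d (ω₂dd x) (Icc (π/2) π) x)
    (hcont' : ContinuousOn ω₂dd (Icc (π/2) π))
    (hode' : ∀ x ∈ Icc (π/2) π, ω₂dd x + q x * ω₂ (x - Δ x) = -μ^2 * ω₂ x)
    (hifc : ω₂ (π/2) = δ⁻¹ * ω₁ (π/2))
    (hifc' : ω₂d (π/2) = δ⁻¹ * ω₁d (π/2)) :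
    (∃ y₁ y₁d y₁dd y₂ y₂d y₂dd : ℝ → ℝ,
      (∀ x ∈ Icc 0 (π/2), HasDerivWithinAt y₁ (y₁d x) (Icc 0 (π/2)) x) ∧
      (∀ x ∈ Icc 0 (π/2), HasDerivWithinAt y₁d (y₁dd x) (Icc 0 (π/2)) x) ∧
      ContinuousOn y₁dd (Icc 0 (π/2)) ∧
      (∀ x ∈ Icc (π/2) π, HasDerivWithinAt y₂ (y₂d x) (Icc (π/2) π) x) ∧
      (∀ x ∈ Icc (π/2) π, HasDerivWithinAt y₂d (y₂dd x) (Icc (π/2) π) x) ∧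
      ContinuousOn y₂dd (Icc (π/2) π) ∧
      ¬((∀ x ∈ Icc 0 (π/2), y₁ x = 0) ∧ (∀ x ∈ Icc (π/2) π, y₂ x = 0)) ∧
      (∀ x ∈ Icc 0 (π/2), y₁dd x + q x * y₁ (x - Δ x) = -μ^2 * y₁ x) ∧
      (∀ x ∈ Icc (π/2) π, y₂dd x + q x * y₂ (x - Δ x) = -μ^2 * y₂ x) ∧
      (μ * a₁' + a₁) * y₁ 0 - (μ * a₂' + a₂) * y₁d 0 = 0 ∧
      Real.cos b * y₂ π + μ * Real.sin b * y₂d π = 0 ∧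
      y₁ (π/2) = δ * y₂ (π/2) ∧
      y₁d (π/2) = δ * y₂d (π/2)) ↔
    Real.cos b * ω₂ π + μ * Real.sin b * ω₂d π = 0 :=
  stmt6_general a₁ a₁' a₂ a₂' b δ hδ q Δ hq1 hq2 hqlim1 hqlim2 hΔ0 hret1 hret2 μ hnz ω₁ ω₁d ω₁dd
    hder1 hder2 hcont hode hinit hinit' ω₂ ω₂d ω₂dd hder1' hder2' hcont' hode' hifc hifc'
end

section
/- There exists a constant C > 0 such that for every complex μ with |μ| ≥ 1 and every x ∈ [0, π/2], the solution ω₁ satisfies the growth bound |ω₁(x, μ)| ≤ C·|μ|·e^{|Im μ|·x}. -/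
/-!
For `‖μ‖ ≥ 1` consider the energy `E = ‖μ ω‖² + ‖ω'‖²`. Substituting the equation into `E'`,
the terms coming from `ω'' = -μ² ω` contribute at most `2 |Im μ| E`, and the delay term, since
`‖ω(x - Δ x)‖ ≤ ‖μ ω(x - Δ x)‖`, at most `M (E(x) + E(x - Δ x))` where `M` bounds `|q|` on
`[0, π/2)`. The delay only looks backwards, so a barrier argument at the first time `E` touches
`(E 0 + ε) e^{(2 |Im μ| + 2M + ε) x}` still works and gives `E x ≤ E 0 e^{2 (|Im μ| + M) x}`.
The initial conditions make `E 0 = O(‖μ‖⁴)`, hence `‖μ‖ ‖ω x‖ ≤ √(E x) = O(‖μ‖² e^{|Im μ| x})`.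
-/

open Real Set Filter Topology ComplexConjugate InnerProductSpace

theorem exists_norm_le_of_continuousOn_Ico_of_tendsto {E : Type*} [SeminormedAddCommGroup E]
    {f : ℝ → E} {a b : ℝ} {L : E} (hf : ContinuousOn f (Ico a b))
    (hL : Tendsto f (𝓝[<] b) (𝓝 L)) : ∃ C, ∀ x ∈ Ico a b, ‖f x‖ ≤ C := by
  obtain ⟨u, hub, hu⟩ :=
    mem_nhdsLT_iff_exists_Ioo_subset.1 (hL (Metric.ball_mem_nhds L one_pos))
  have hcover : f '' Ico a b ⊆ f '' Icc a u ∪ Metric.ball L 1 := by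
    rintro _ ⟨x, hx, rfl⟩
    rcases le_or_gt x u with hxu | hux
    · exact Or.inl (mem_image_of_mem f ⟨hx.1, hxu⟩)
    · exact Or.inr (hu ⟨hux, hx.2⟩)
  have hIcc : ContinuousOn f (Icc a u) := hf.mono fun x hx => ⟨hx.1, hx.2.trans_lt hub⟩
  obtain ⟨C, hC⟩ := isBounded_iff_forall_norm_le.1
    (((isCompact_Icc.image_of_continuousOn hIcc).isBounded.union Metric.isBounded_ball).subset
      hcover)
  exact ⟨C, fun x hx => hC _ (mem_image_of_mem f hx)⟩

theorem lt_on_Ico_of_first_touch {f f' B B' : ℝ → ℝ} {a b : ℝ}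
    (hf : ∀ x ∈ Ico a b, HasDerivWithinAt f (f' x) (Icc a b) x)
    (hB : ∀ x ∈ Ico a b, HasDerivWithinAt B (B' x) (Icc a b) x)
    (ha : f a < B a)
    (htouch : ∀ x ∈ Ioo a b, (∀ y ∈ Ico a x, f y < B y) → f x = B x → f' x < B' x) :
    ∀ x ∈ Ico a b, f x < B x := by
  by_contra! ⟨x₀, hx₀, hBf⟩
  set g : ℝ → ℝ := fun x => f x - B x
  have hg : ∀ x ∈ Ico a b, HasDerivWithinAt g (f' x - B' x) (Icc a b) x :=
    fun x hx => (hf x hx).sub (hB x hx)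
  have hgcont : ContinuousOn g (Icc a x₀) := fun x hx =>
    (hg x ⟨hx.1, hx.2.trans_lt hx₀.2⟩).continuousWithinAt.mono
      (Icc_subset_Icc_right hx₀.2.le)
  set T := {x ∈ Icc a x₀ | 0 ≤ g x}
  have hT : IsClosed T := isClosed_Icc.isClosed_le continuousOn_const hgcont
  have hTbdd : BddBelow T := ⟨a, fun x hx => hx.1.1⟩
  set c := sInf T
  have hcT : c ∈ T := hT.csInf_mem ⟨x₀, ⟨hx₀.1, le_rfl⟩, sub_nonneg.2 hBf⟩ hTbdd
  have hbefore : ∀ y ∈ Ico a c, f y < B y := fun y hy => by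
    by_contra! h
    exact (csInf_le hTbdd ⟨⟨hy.1, hy.2.le.trans hcT.1.2⟩, sub_nonneg.2 h⟩).not_gt hy.2
  have hac : a < c := hcT.1.1.lt_of_ne fun h => (sub_nonneg.1 (h ▸ hcT.2)).not_gt ha
  have hc : c ∈ Ioo a b := ⟨hac, hcT.1.2.trans_lt hx₀.2⟩
  have hgc : HasDerivWithinAt g (f' c - B' c) (Iio c) c :=
    (hg c ⟨hac.le, hc.2⟩).mono_of_mem_nhdsWithin (Icc_mem_nhdsLT_of_mem ⟨hac, hc.2.le⟩)
  have hneg_before : ∀ᶠ y in 𝓝[<] c, g y < 0 :=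
    Filter.mem_of_superset (Ioo_mem_nhdsLT hac) fun y hy => sub_neg.2 (hbefore y ⟨hy.1.le, hy.2⟩)
  have hgc0 : g c = 0 :=
    le_antisymm (le_of_tendsto hgc.continuousWithinAt (hneg_before.mono fun _ => le_of_lt))
      hcT.2
  have hslope := hgc.limsup_slope_le' (lt_irrefl c)
    (sub_neg.2 (htouch c hc hbefore (sub_eq_zero.1 hgc0)))
  obtain ⟨y, hy, hgy, hyc⟩ :=
    (hslope.and (hneg_before.and self_mem_nhdsWithin)).exists
  rw [slope_def_field, hgc0, sub_zero] at hy
  exact hy.not_gt (div_pos_of_neg_of_neg hgy (sub_neg.2 hyc))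

section DelayGronwall

variable {f f' ρ : ℝ → ℝ} {a b α β : ℝ}

theorem lt_mul_exp_of_hasDerivWithinAt_le_delay (hβ : 0 ≤ β) (hαβ : 0 ≤ α + β)
    (hfa : 0 ≤ f a) (hf : ∀ x ∈ Icc a b, HasDerivWithinAt f (f' x) (Icc a b) x)
    (hρ : ∀ x ∈ Ico a b, ρ x ∈ Icc a x) (hf' : ∀ x ∈ Ico a b, f' x ≤ α * f x + β * f (ρ x))
    {ε : ℝ} (hε : 0 < ε) :
    ∀ x ∈ Ico a b, f x < (f a + ε) * exp ((α + β + ε) * (x - a)) := by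
  set B : ℝ → ℝ := fun x => (f a + ε) * exp ((α + β + ε) * (x - a))
  have hB : ∀ x, HasDerivAt B ((α + β + ε) * B x) x := fun x => by
    refine ((((hasDerivAt_id x).sub_const a).const_mul (α + β + ε)).exp.const_mul
      (f a + ε)).congr_deriv ?_
    simp only [B, id]; ring
  have hBpos : ∀ x, 0 < B x := fun x => by positivity
  have hBmono : ∀ x y, x ≤ y → B x ≤ B y := fun x y hxy => by
    simp only [B]; gcongr
  refine lt_on_Ico_of_first_touch (fun x hx => hf x (Ico_subset_Icc_self hx))
    (fun x _ => (hB x).hasDerivWithinAt) (by simp [hε]) fun x hx hbefore htouch => ?_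
  have hxI : x ∈ Ico a b := ⟨hx.1.le, hx.2⟩
  have hfρ : f (ρ x) ≤ B x := by
    rcases (hρ x hxI).2.lt_or_eq with hlt | heq
    · exact (hbefore _ ⟨(hρ x hxI).1, hlt⟩).le.trans (hBmono _ _ hlt.le)
    · rw [heq, htouch]
  calc f' x ≤ α * f x + β * f (ρ x) := hf' x hxI
    _ ≤ α * B x + β * B x := by rw [htouch]; gcongr
    _ < (α + β + ε) * B x := by nlinarith [hBpos x]

theorem le_mul_exp_of_hasDerivWithinAt_le_delay (hβ : 0 ≤ β) (hαβ : 0 ≤ α + β)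
    (hfa : 0 ≤ f a) (hf : ∀ x ∈ Icc a b, HasDerivWithinAt f (f' x) (Icc a b) x)
    (hρ : ∀ x ∈ Ico a b, ρ x ∈ Icc a x) (hf' : ∀ x ∈ Ico a b, f' x ≤ α * f x + β * f (ρ x)) :
    ∀ x ∈ Icc a b, f x ≤ f a * exp ((α + β) * (x - a)) := by
  have hIco : ∀ x ∈ Ico a b, f x ≤ f a * exp ((α + β) * (x - a)) := fun x hx => by
    have hlim : Tendsto (fun ε => (f a + ε) * exp ((α + β + ε) * (x - a))) (𝓝[>] 0)
        (𝓝 (f a * exp ((α + β) * (x - a)))) :=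
      (Continuous.tendsto' (by fun_prop) 0 _ (by simp)).mono_left nhdsWithin_le_nhds
    exact ge_of_tendsto hlim (eventually_nhdsWithin_of_forall fun ε hε =>
      (lt_mul_exp_of_hasDerivWithinAt_le_delay hβ hαβ hfa hf hρ hf' hε x hx).le)
  rcases eq_or_ne a b with rfl | hab
  · intro x hx
    simp [le_antisymm hx.2 hx.1]
  · rw [← closure_Ico hab]
    refine le_on_closure hIco ?_ (by fun_prop)
    rw [closure_Ico hab]
    exact fun x hx => (hf x hx).continuousWithinAt

end DelayGronwall

theorem Complex.inner_mul_sub_inner_mul_le (μ u v : ℂ) :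
    ⟪u, μ * v⟫_ℝ - ⟪v, μ * u⟫_ℝ ≤ |μ.im| * (‖u‖ ^ 2 + ‖v‖ ^ 2) := by
  have hζ : ⟪u, μ * v⟫_ℝ - ⟪v, μ * u⟫_ℝ = -2 * μ.im * (v * conj u).im := by
    simp only [Complex.inner, Complex.mul_re, Complex.mul_im, Complex.conj_re, Complex.conj_im]
    ring
  calc ⟪u, μ * v⟫_ℝ - ⟪v, μ * u⟫_ℝ = -2 * μ.im * (v * conj u).im := hζ
    _ ≤ 2 * |μ.im| * |(v * conj u).im| := by
      refine (le_abs_self _).trans_eq ?_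
      rw [abs_mul, abs_mul]; norm_num
    _ ≤ 2 * |μ.im| * ‖v * conj u‖ := by gcongr; exact Complex.abs_im_le_norm _
    _ = |μ.im| * (2 * ‖u‖ * ‖v‖) := by rw [norm_mul, Complex.norm_conj]; ring
    _ ≤ |μ.im| * (‖u‖ ^ 2 + ‖v‖ ^ 2) := by gcongr; exact two_mul_le_add_sq _ _

theorem energy_deriv_le {μ w w' wρ : ℂ} {qx M : ℝ} (hμ : 1 ≤ ‖μ‖) (hq : |qx| ≤ M) :
    2 * ⟪μ * w, μ * w'⟫_ℝ + 2 * ⟪w', -μ ^ 2 * w - qx * wρ⟫_ℝ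
      ≤ (2 * |μ.im| + M) * (‖μ * w‖ ^ 2 + ‖w'‖ ^ 2) + M * ‖μ * wρ‖ ^ 2 := by
  have hsplit : 2 * ⟪μ * w, μ * w'⟫_ℝ + 2 * ⟪w', -μ ^ 2 * w - qx * wρ⟫_ℝ
      = 2 * (⟪μ * w, μ * w'⟫_ℝ - ⟪w', μ * (μ * w)⟫_ℝ) - 2 * qx * ⟪w', wρ⟫_ℝ := by
    simp only [Complex.inner, Complex.mul_re, Complex.mul_im, Complex.conj_re, Complex.conj_im,
      Complex.sub_re, Complex.neg_re, Complex.neg_im, Complex.sub_im, Complex.ofReal_re,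
      Complex.ofReal_im, sq]
    ring
  have hM : 0 ≤ M := (abs_nonneg qx).trans hq
  have hdelay : -(2 * qx * ⟪w', wρ⟫_ℝ) ≤ M * (‖w'‖ ^ 2 + ‖μ * wρ‖ ^ 2) :=
    calc -(2 * qx * ⟪w', wρ⟫_ℝ) ≤ |qx| * (2 * |⟪w', wρ⟫_ℝ|) := by
          refine (neg_le_abs _).trans_eq ?_
          rw [abs_mul, abs_mul, abs_two]; ring
      _ ≤ M * (2 * ‖w'‖ * ‖μ * wρ‖) := by
          rw [mul_assoc 2]
          gcongr
          refine (abs_real_inner_le_norm _ _).trans ?_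
          gcongr
          rw [norm_mul]
          exact le_mul_of_one_le_left (norm_nonneg _) hμ
      _ ≤ M * (‖w'‖ ^ 2 + ‖μ * wρ‖ ^ 2) := by gcongr; exact two_mul_le_add_sq _ _
  have hrot := Complex.inner_mul_sub_inner_mul_le μ (μ * w) w'
  linarith [mul_nonneg hM (sq_nonneg ‖μ * w‖)]

theorem Complex.norm_mul_ofReal_add_ofReal_le {μ : ℂ} (hμ : 1 ≤ ‖μ‖) (s t : ℝ) :
    ‖μ * s + t‖ ≤ ‖μ‖ * (|s| + |t|) :=
  calc ‖μ * s + t‖ ≤ ‖μ‖ * |s| + |t| := by simpa [norm_mul] using norm_add_le (μ * s) (t : ℂ)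
    _ ≤ ‖μ‖ * (|s| + |t|) := by
      rw [mul_add]; gcongr; exact le_mul_of_one_le_left (abs_nonneg t) hμ

theorem initial_energy_le {μ : ℂ} (hμ : 1 ≤ ‖μ‖) (a₁ a₁' a₂ a₂' : ℝ) :
    ‖μ * (μ * a₂' + a₂)‖ ^ 2 + ‖(μ * a₁' + a₁ : ℂ)‖ ^ 2
      ≤ (‖μ‖ ^ 2 * (|a₂'| + |a₂| + (|a₁'| + |a₁|))) ^ 2 := by
  have h₂ : ‖μ * (μ * a₂' + a₂)‖ ≤ ‖μ‖ ^ 2 * (|a₂'| + |a₂|) := by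
    rw [norm_mul, sq, mul_assoc]
    gcongr
    exact Complex.norm_mul_ofReal_add_ofReal_le hμ a₂' a₂
  have h₁ : ‖(μ * a₁' + a₁ : ℂ)‖ ≤ ‖μ‖ ^ 2 * (|a₁'| + |a₁|) :=
    (Complex.norm_mul_ofReal_add_ofReal_le hμ a₁' a₁).trans (by gcongr; nlinarith)
  have hcross : 0 ≤ ‖μ‖ ^ 2 * (|a₂'| + |a₂|) * (‖μ‖ ^ 2 * (|a₁'| + |a₁|)) := by positivity
  calc _ ≤ (‖μ‖ ^ 2 * (|a₂'| + |a₂|)) ^ 2 + (‖μ‖ ^ 2 * (|a₁'| + |a₁|)) ^ 2 := by gcongr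
    _ ≤ (‖μ‖ ^ 2 * (|a₂'| + |a₂|) + ‖μ‖ ^ 2 * (|a₁'| + |a₁|)) ^ 2 := by nlinarith
    _ = _ := by rw [← mul_add]

theorem energy_le_of_hasDerivWithinAt_delay_ode {ω ω' ω'' : ℝ → ℂ} {q ρ : ℝ → ℝ} {μ : ℂ}
    {a b M : ℝ} (hμ : 1 ≤ ‖μ‖) (hq : ∀ x ∈ Ico a b, |q x| ≤ M) (hM : 0 ≤ M)
    (hρ : ∀ x ∈ Ico a b, ρ x ∈ Icc a x)
    (hω : ∀ x ∈ Icc a b, HasDerivWithinAt ω (ω' x) (Icc a b) x)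
    (hω' : ∀ x ∈ Icc a b, HasDerivWithinAt ω' (ω'' x) (Icc a b) x)
    (hode : ∀ x ∈ Ico a b, ω'' x + q x * ω (ρ x) = -μ ^ 2 * ω x) :
    ∀ x ∈ Icc a b, ‖μ * ω x‖ ^ 2 + ‖ω' x‖ ^ 2
      ≤ (‖μ * ω a‖ ^ 2 + ‖ω' a‖ ^ 2) * exp ((2 * |μ.im| + M + M) * (x - a)) := by
  refine le_mul_exp_of_hasDerivWithinAt_le_delay hM (by positivity) (by positivity)
    (fun x hx => ((hω x hx).const_mul μ).norm_sq.add (hω' x hx).norm_sq) hρ fun x hx => ?_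
  rw [eq_sub_of_add_eq (hode x hx)]
  refine (energy_deriv_le hμ (hq x hx)).trans ?_
  gcongr
  exact le_add_of_nonneg_right (sq_nonneg _)

theorem stmt7_general
    (a₁ a₁' a₂ a₂' : ℝ)
    (q Δ : ℝ → ℝ)
    (hq1 : ContinuousOn q (Ico 0 (π/2)))
    (hqlim1 : ∃ L : ℝ, Filter.Tendsto q (nhdsWithin (π/2) (Iio (π/2))) (nhds L))
    (hΔ0 : ∀ x, 0 ≤ Δ x)
    (hret1 : ∀ x ∈ Ico 0 (π/2), 0 ≤ x - Δ x)
    (ω₁ ω₁d ω₁dd : ℂ → ℝ → ℂ)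
    (hder1 : ∀ (μ : ℂ), ∀ x ∈ Icc 0 (π/2),
      HasDerivWithinAt (ω₁ μ) (ω₁d μ x) (Icc 0 (π/2)) x)
    (hder2 : ∀ (μ : ℂ), ∀ x ∈ Icc 0 (π/2),
      HasDerivWithinAt (ω₁d μ) (ω₁dd μ x) (Icc 0 (π/2)) x)
    (hode : ∀ (μ : ℂ), ∀ x ∈ Icc 0 (π/2),
      ω₁dd μ x + (q x : ℂ) * ω₁ μ (x - Δ x) = -μ^2 * ω₁ μ x)
    (hinit : ∀ (μ : ℂ), ω₁ μ 0 = μ * a₂' + a₂)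
    (hinit' : ∀ (μ : ℂ), ω₁d μ 0 = μ * a₁' + a₁) :
    ∃ C > 0, ∀ (μ : ℂ), 1 ≤ ‖μ‖ → ∀ x ∈ Icc 0 (π/2),
      ‖ω₁ μ x‖ ≤ C * ‖μ‖ * Real.exp (|μ.im| * x) := by
  obtain ⟨L, hL⟩ := hqlim1
  obtain ⟨M, hM⟩ := exists_norm_le_of_continuousOn_Ico_of_tendsto hq1 hL
  have hM0 : 0 ≤ M := (norm_nonneg _).trans (hM 0 ⟨le_rfl, by positivity⟩)
  set A := |a₂'| + |a₂| + (|a₁'| + |a₁|)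
  refine ⟨(A + 1) * exp (M * (π / 2)), by positivity, fun μ hμ x hx => ?_⟩
  have hE := energy_le_of_hasDerivWithinAt_delay_ode (ρ := fun x => x - Δ x) hμ
    (fun x hx => (Real.norm_eq_abs (q x)).symm.trans_le (hM x hx)) hM0
    (fun x hx => ⟨hret1 x hx, by linarith [hΔ0 x]⟩) (hder1 μ) (hder2 μ)
    (fun x hx => hode μ x (Ico_subset_Icc_self hx)) x hx
  rw [hinit, hinit'] at hE
  have hsq : ‖μ * ω₁ μ x‖ ^ 2 ≤ (‖μ‖ ^ 2 * A * exp ((|μ.im| + M) * x)) ^ 2 :=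
    calc _ ≤ ‖μ * ω₁ μ x‖ ^ 2 + ‖ω₁d μ x‖ ^ 2 := le_add_of_nonneg_right (sq_nonneg _)
      _ ≤ (‖μ‖ ^ 2 * A) ^ 2 * exp ((2 * |μ.im| + M + M) * (x - 0)) :=
        hE.trans (by gcongr; exact initial_energy_le hμ a₁ a₁' a₂ a₂')
      _ = _ := by rw [mul_pow _ (exp _), ← exp_nat_mul]; ring_nf
  have hnorm : ‖μ‖ * ‖ω₁ μ x‖ ≤ ‖μ‖ ^ 2 * A * exp ((|μ.im| + M) * x) := by
    rw [← norm_mul]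
    exact le_of_pow_le_pow_left₀ two_ne_zero (by positivity) hsq
  refine le_of_mul_le_mul_left (hnorm.trans ?_) (one_pos.trans_le hμ)
  calc ‖μ‖ ^ 2 * A * exp ((|μ.im| + M) * x)
      = ‖μ‖ ^ 2 * A * exp (M * x) * exp (|μ.im| * x) := by rw [add_mul, exp_add]; ring
    _ ≤ ‖μ‖ ^ 2 * (A + 1) * exp (M * (π / 2)) * exp (|μ.im| * x) := by
      gcongr
      · linarith
      · exact hx.2
    _ = _ := by ring

theorem stmt7
    (a₁ a₁' a₂ a₂' b δ : ℝ) (hδ : δ ≠ 0) (ha₂' : a₂' ≠ 0)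
    (q Δ : ℝ → ℝ)
    (hq1 : ContinuousOn q (Ico 0 (π/2))) (hq2 : ContinuousOn q (Ioc (π/2) π))
    (hqlim1 : ∃ L : ℝ, Filter.Tendsto q (nhdsWithin (π/2) (Iio (π/2))) (nhds L))
    (hqlim2 : ∃ L : ℝ, Filter.Tendsto q (nhdsWithin (π/2) (Ioi (π/2))) (nhds L))
    (hΔ1 : ContinuousOn Δ (Ico 0 (π/2))) (hΔ2 : ContinuousOn Δ (Ioc (π/2) π))
    (hΔlim1 : ∃ L : ℝ, Filter.Tendsto Δ (nhdsWithin (π/2) (Iio (π/2))) (nhds L))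
    (hΔlim2 : ∃ L : ℝ, Filter.Tendsto Δ (nhdsWithin (π/2) (Ioi (π/2))) (nhds L))
    (hΔ0 : ∀ x, 0 ≤ Δ x)
    (hret1 : ∀ x ∈ Ico 0 (π/2), 0 ≤ x - Δ x)
    (hret2 : ∀ x ∈ Ioc (π/2) π, π/2 ≤ x - Δ x)
    (ω₁ ω₁d ω₁dd : ℂ → ℝ → ℂ)
    (hder1 : ∀ (μ : ℂ), ∀ x ∈ Icc 0 (π/2),
      HasDerivWithinAt (ω₁ μ) (ω₁d μ x) (Icc 0 (π/2)) x)
    (hder2 : ∀ (μ : ℂ), ∀ x ∈ Icc 0 (π/2),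
      HasDerivWithinAt (ω₁d μ) (ω₁dd μ x) (Icc 0 (π/2)) x)
    (hcont : ∀ (μ : ℂ), ContinuousOn (ω₁dd μ) (Icc 0 (π/2)))
    (hode : ∀ (μ : ℂ), ∀ x ∈ Icc 0 (π/2),
      ω₁dd μ x + (q x : ℂ) * ω₁ μ (x - Δ x) = -μ^2 * ω₁ μ x)
    (hinit : ∀ (μ : ℂ), ω₁ μ 0 = μ * a₂' + a₂)
    (hinit' : ∀ (μ : ℂ), ω₁d μ 0 = μ * a₁' + a₁) :
    ∃ C > 0, ∀ (μ : ℂ), 1 ≤ ‖μ‖ → ∀ x ∈ Icc 0 (π/2),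
      ‖ω₁ μ x‖ ≤ C * ‖μ‖ * Real.exp (|μ.im| * x) :=
  stmt7_general a₁ a₁' a₂ a₂' q Δ hq1 hqlim1 hΔ0 hret1 ω₁ ω₁d ω₁dd hder1 hder2 hode hinit hinit'
end
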